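/- Let S be a boolean representable near-matroid and k ≥ 0. Then the k-truncation T_k(S) is boolean representable; in fact T_k(H) equals Tr(F_k), where F_k = {F ∈ L(S) : ρ(F) < k} ∪ {V}. -/
import Mathlib


open scoped Classical

variable {V : Type*}

/-- A (finite) simplicial complex on vertex set `V`: all singletons are faces and
faces are closed under taking subsets. -/
def IsSimplicialComplex [DecidableEq V] (H : Set (Finset V)) : Prop :=
  (∀ v : V, {v} ∈ H) ∧ ∀ X ∈ H, ∀ Y ⊆ X, Y ∈ H

/-- `F` is a flat of the complex with faces `H`. -/
def IsFlat [DecidableEq V] (H : Set (Finset V)) (F : Finset V) : Prop :=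
  ∀ I ∈ H, I ⊆ F → ∀ p ∉ F, insert p I ∈ H

/-- `X` is a facet (maximal face) of `H`. -/
def IsFacet (H : Set (Finset V)) (X : Finset V) : Prop :=
  X ∈ H ∧ ∀ Y ∈ H, X ⊆ Y → Y = X

/-- The `k`-truncation of the family of faces `H`. -/
def trunc (H : Set (Finset V)) (k : ℕ) : Set (Finset V) :=
  {X ∈ H | X.card ≤ k}

/-- `H` has dimension `d`: some face has `d+1` elements and all faces have at most `d+1`. -/
def HasDim (H : Set (Finset V)) (d : ℕ) : Prop :=
  (∃ X ∈ H, X.card = d + 1) ∧ ∀ X ∈ H, X.card ≤ d + 1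

/-- `H` is paving of dimension `d`: every `d`-subset is a face and the maximal face
cardinality is `d+1`. -/
def PavingDim (H : Set (Finset V)) (d : ℕ) : Prop :=
  (∀ X : Finset V, X.card = d → X ∈ H) ∧ (∃ X ∈ H, X.card = d + 1) ∧
    ∀ X ∈ H, X.card ≤ d + 1

/-- `X` is a transversal of the successive differences for a chain
`C 0 ⊆ C 1 ⊆ … ⊆ C k` in the family `F`, i.e. `X` enumerates as `x 0, …, x (k-1)`
with `x i ∈ C (i+1) \ C i`. -/
def Transversal [DecidableEq V] (F : Set (Finset V)) (X : Finset V) : Prop :=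
  ∃ (k : ℕ) (x : Fin k → V) (C : Fin (k + 1) → Finset V),
    Function.Injective x ∧
    X = Finset.image x Finset.univ ∧
    (∀ i, C i ∈ F) ∧
    (∀ i : Fin k, C i.castSucc ⊆ C i.succ) ∧
    (∀ i : Fin k, x i ∈ C i.succ ∧ x i ∉ C i.castSucc)

/-- The set of all transversals of the successive differences for chains in `F`. -/
def Tr [DecidableEq V] (F : Set (Finset V)) : Set (Finset V) :=
  {X | Transversal F X}

/-- `H` is boolean representable: its faces are exactly the transversals of the
successive differences for chains in its lattice of flats. -/
def BooleanRepresentable [DecidableEq V] (H : Set (Finset V)) : Prop :=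
  H = Tr {F | IsFlat H F}

/-- The family `ε(S)` for a complex of dimension `d`. -/
def eps [DecidableEq V] (H : Set (Finset V)) (d : ℕ) : Set (Finset V) :=
  {X | ∀ Y ∈ H, Y ⊆ X → Y.card ≤ d → ∀ p ∉ X, insert p Y ∈ H}

/-- `H` is a truncated boolean representable simplicial complex. -/
def IsTBRSC [DecidableEq V] (H : Set (Finset V)) : Prop :=
  ∃ (H' : Set (Finset V)) (k : ℕ), 1 ≤ k ∧ IsSimplicialComplex H' ∧
    BooleanRepresentable H' ∧ H = trunc H' k

/-- The complex `B_d(V,L)`. -/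
def Bd [DecidableEq V] (d : ℕ) (L : Finset V) : Set (Finset V) :=
  {X | X.card ≤ d} ∪ {X | X.card = d + 1 ∧ (X ∩ L).card = d}

/-- The closure of `X`: the intersection of all flats containing `X`. -/
noncomputable def cl [Fintype V] [DecidableEq V] (H : Set (Finset V)) (X : Finset V) :
    Finset V :=
  Finset.univ.filter fun v => ∀ F : Finset V, IsFlat H F → X ⊆ F → v ∈ F

/-- `H` is a near-matroid. -/
def NearMatroid [Fintype V] [DecidableEq V] (H : Set (Finset V)) : Prop :=
  ∀ X ∈ H, ∀ Y ∈ H, cl H X = cl H Y → cl H X ≠ Finset.univ → X.card = Y.card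

/-- `H` is a matroid: a simplicial complex with the exchange property. -/
def IsMatroid [DecidableEq V] (H : Set (Finset V)) : Prop :=
  IsSimplicialComplex H ∧
    ∀ I ∈ H, ∀ J ∈ H, I.card = J.card + 1 → ∃ i ∈ I, i ∉ J ∧ insert i J ∈ H


section Helpers

variable [Fintype V] [DecidableEq V]

lemma isFlat_univ {H : Set (Finset V)} : IsFlat H (Finset.univ : Finset V) :=
  fun _ _ _ p hp => absurd (Finset.mem_univ p) hp

lemma subset_cl {H : Set (Finset V)} (X : Finset V) : X ⊆ cl H X := by
  intro v hv
  simp only [cl, Finset.mem_filter, Finset.mem_univ, true_and]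
  intro F _ hXF
  exact hXF hv

lemma cl_subset {H : Set (Finset V)} {F X : Finset V} (hF : IsFlat H F) (hXF : X ⊆ F) :
    cl H X ⊆ F := by
  intro v hv
  simp only [cl, Finset.mem_filter, Finset.mem_univ, true_and] at hv
  exact hv F hF hXF

lemma cl_mono {H : Set (Finset V)} {X Y : Finset V} (h : X ⊆ Y) : cl H X ⊆ cl H Y := by
  intro v hv
  simp only [cl, Finset.mem_filter, Finset.mem_univ, true_and] at hv ⊢
  exact fun F hF hYF => hv F hF (h.trans hYF)

lemma isFlat_cl {H : Set (Finset V)} (X : Finset V) : IsFlat H (cl H X) := by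
  intro I hI hIcl p hp
  simp only [cl, Finset.mem_filter, Finset.mem_univ, true_and, not_forall] at hp
  obtain ⟨F, hF, hXF, hpF⟩ := hp
  exact hF I hI (hIcl.trans (cl_subset hF hXF)) p hpF

lemma exists_extend {H : Set (Finset V)} {F : Finset V} (hF : IsFlat H F) :
    ∀ n (Z : Finset V), F.card - Z.card ≤ n → Z ∈ H → Z ⊆ F →
      ∃ Z', Z ⊆ Z' ∧ Z' ∈ H ∧ Z' ⊆ F ∧ cl H Z' = F := by
  intro n
  induction n with
  | zero =>
    intro Z hn hZ hZF
    have hcard : F.card ≤ Z.card := by omega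
    have hZF' : Z = F := Finset.eq_of_subset_of_card_le hZF hcard
    subst hZF'
    exact ⟨Z, subset_rfl, hZ, subset_rfl,
      subset_antisymm (cl_subset hF subset_rfl) (subset_cl Z)⟩
  | succ n ih =>
    intro Z hn hZ hZF
    by_cases hcl : cl H Z = F
    · exact ⟨Z, subset_rfl, hZ, hZF, hcl⟩
    · have hsub : cl H Z ⊆ F := cl_subset hF hZF
      have hex : ∃ p ∈ F, p ∉ cl H Z := by
        by_contra hc
        push_neg at hc
        exact hcl (subset_antisymm hsub hc)
      obtain ⟨p, hpF, hpcl⟩ := hex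
      have hpZ : p ∉ Z := fun h => hpcl (subset_cl Z h)
      have hins : insert p Z ∈ H := isFlat_cl Z Z hZ (subset_cl Z) p hpcl
      have hinsF : insert p Z ⊆ F := Finset.insert_subset hpF hZF
      have hcard : (insert p Z).card = Z.card + 1 := Finset.card_insert_of_notMem hpZ
      have hle : (insert p Z).card ≤ F.card := Finset.card_le_card hinsF
      obtain ⟨Z', h1, h2, h3, h4⟩ := ih (insert p Z) (by omega) hins hinsF
      exact ⟨Z', (Finset.subset_insert p Z).trans h1, h2, h3, h4⟩

lemma chain_mono {m : ℕ} {C : Fin (m + 1) → Finset V}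
    (h : ∀ i : Fin m, C i.castSucc ⊆ C i.succ) :
    ∀ a b : Fin (m + 1), a ≤ b → C a ⊆ C b := by
  have key : ∀ d (a b : Fin (m + 1)), (b : ℕ) = (a : ℕ) + d → C a ⊆ C b := by
    intro d
    induction d with
    | zero =>
      intro a b hb
      have : a = b := Fin.ext (by omega)
      rw [this]
    | succ d ih =>
      intro a b hb
      have him : (a : ℕ) + d < m := by omega
      set i : Fin m := ⟨(a : ℕ) + d, him⟩ with hi
      have h1 : C a ⊆ C i.castSucc := ih a i.castSucc rfl
      have h2 : C i.succ = C b := by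
        congr 1
        apply Fin.ext
        simp [hi, Fin.val_succ]
        omega
      exact h1.trans (h2 ▸ h i)
  intro a b hab
  exact key ((b : ℕ) - (a : ℕ)) a b (by have := (Fin.le_def.mp hab); omega)

/-- The prefix `{x 0, …, x (j-1)}` of a transversal. -/
def pfx {m : ℕ} (x : Fin m → V) (j : ℕ) : Finset V :=
  Finset.image x (Finset.univ.filter fun i : Fin m => (i : ℕ) < j)

lemma pfx_zero {m : ℕ} (x : Fin m → V) : pfx x 0 = ∅ := by
  simp [pfx]

lemma pfx_succ {m : ℕ} (x : Fin m → V) {j : ℕ} (hj : j < m) :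
    pfx x (j + 1) = insert (x ⟨j, hj⟩) (pfx x j) := by
  have hfil : (Finset.univ.filter fun i : Fin m => (i : ℕ) < j + 1)
      = insert (⟨j, hj⟩ : Fin m) (Finset.univ.filter fun i : Fin m => (i : ℕ) < j) := by
    ext i
    simp [Fin.ext_iff]
    omega
  rw [pfx, hfil, Finset.image_insert]
  rfl

lemma pfx_last {m : ℕ} (x : Fin m → V) : pfx x m = Finset.image x Finset.univ := by
  unfold pfx
  rw [Finset.filter_true_of_mem (fun i _ => i.isLt)]

lemma pfx_subset_total {m : ℕ} (x : Fin m → V) (j : ℕ) :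
    pfx x j ⊆ Finset.image x Finset.univ :=
  Finset.image_subset_image (Finset.filter_subset _ _)

lemma pfx_mono {m : ℕ} (x : Fin m → V) {j j' : ℕ} (h : j ≤ j') : pfx x j ⊆ pfx x j' := by
  intro v hv
  simp only [pfx, Finset.mem_image, Finset.mem_filter, Finset.mem_univ, true_and] at hv ⊢
  obtain ⟨i, hi, rfl⟩ := hv
  exact ⟨i, by omega, rfl⟩

lemma mem_pfx {m : ℕ} (x : Fin m → V) {i : Fin m} {j : ℕ} (h : (i : ℕ) < j) :
    x i ∈ pfx x j :=
  Finset.mem_image.mpr ⟨i, by simp [h], rfl⟩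

lemma pfx_notMem {m : ℕ} {x : Fin m → V} (hinj : Function.Injective x) (i : Fin m) :
    x i ∉ pfx x (i : ℕ) := by
  intro hmem
  obtain ⟨a, ha, hxa⟩ := Finset.mem_image.mp hmem
  have ha' : (a : ℕ) < (i : ℕ) := (Finset.mem_filter.mp ha).2
  have : a = i := hinj hxa
  omega

lemma pfx_card {m : ℕ} {x : Fin m → V} (hinj : Function.Injective x) :
    ∀ j, j ≤ m → (pfx x j).card = j := by
  intro j
  induction j with
  | zero => intro _; simp [pfx_zero]
  | succ j ih =>
    intro hj
    have hjm : j < m := by omega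
    rw [pfx_succ x hjm, Finset.card_insert_of_notMem (pfx_notMem hinj ⟨j, hjm⟩),
      ih (by omega)]

lemma pfx_subset_chain {m : ℕ} {x : Fin m → V} {C : Fin (m + 1) → Finset V}
    (hchain : ∀ i : Fin m, C i.castSucc ⊆ C i.succ)
    (hxC : ∀ i : Fin m, x i ∈ C i.succ ∧ x i ∉ C i.castSucc)
    (b : Fin (m + 1)) : pfx x (b : ℕ) ⊆ C b := by
  intro v hv
  simp only [pfx, Finset.mem_image, Finset.mem_filter, Finset.mem_univ, true_and] at hv
  obtain ⟨i, hi, rfl⟩ := hv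
  have h1 : x i ∈ C i.succ := (hxC i).1
  exact chain_mono hchain i.succ b (by rw [Fin.le_def]; simp; omega) h1

lemma pfx_mem {G : Set (Finset V)} {m : ℕ} {x : Fin m → V} {C : Fin (m + 1) → Finset V}
    (hempty : (∅ : Finset V) ∈ G)
    (hCF : ∀ i, IsFlat G (C i))
    (hchain : ∀ i : Fin m, C i.castSucc ⊆ C i.succ)
    (hxC : ∀ i : Fin m, x i ∈ C i.succ ∧ x i ∉ C i.castSucc) :
    ∀ j, j ≤ m → pfx x j ∈ G := by
  intro j
  induction j with
  | zero => intro _; rw [pfx_zero]; exact hempty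
  | succ j ih =>
    intro hj
    have hjm : j < m := by omega
    rw [pfx_succ x hjm]
    have hsub : pfx x j ⊆ C (⟨j, hjm⟩ : Fin m).castSucc :=
      pfx_subset_chain hchain hxC (⟨j, hjm⟩ : Fin m).castSucc
    exact hCF _ _ (ih (by omega)) hsub _ (hxC ⟨j, hjm⟩).2

lemma tr_subset_of_flats {G F : Set (Finset V)} (hempty : (∅ : Finset V) ∈ G)
    (hF : ∀ A ∈ F, IsFlat G A) : Tr F ⊆ G := by
  rintro X ⟨m, x, C, hinj, hX, hCF, hchain, hxC⟩
  have := pfx_mem hempty (fun i => hF _ (hCF i)) hchain hxC m le_rfl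
  rwa [pfx_last, ← hX] at this

lemma Tr_mono {F G : Set (Finset V)} (h : F ⊆ G) : Tr F ⊆ Tr G := by
  rintro X ⟨m, x, C, h1, h2, h3, h4, h5⟩
  exact ⟨m, x, C, h1, h2, fun i => h (h3 i), h4, h5⟩

end Helpers

theorem stmt_19 [Fintype V] [DecidableEq V] [Nonempty V] (H : Set (Finset V))
    (hS : IsSimplicialComplex H) (hBR : BooleanRepresentable H) (hNM : NearMatroid H)
    (k : ℕ) :
    BooleanRepresentable (trunc H k) ∧
      trunc H k =
        Tr ({F : Finset V | IsFlat H F ∧ F ≠ Finset.univ ∧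
              ∃ X ∈ H, cl H X = F ∧ X.card < k} ∪ {Finset.univ}) := by
  obtain ⟨v0⟩ := (inferInstance : Nonempty V)
  have hempty : (∅ : Finset V) ∈ H := hS.2 {v0} (hS.1 v0) ∅ (Finset.empty_subset _)
  have hFkflats : ∀ A ∈ ({F : Finset V | IsFlat H F ∧ F ≠ Finset.univ ∧
      ∃ X ∈ H, cl H X = F ∧ X.card < k} ∪ {Finset.univ}), IsFlat H A := by
    rintro A (⟨hf, -⟩ | rfl)
    · exact hf
    · exact isFlat_univ
  have dir1 : trunc H k ⊆ Tr ({F : Finset V | IsFlat H F ∧ F ≠ Finset.univ ∧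
      ∃ X ∈ H, cl H X = F ∧ X.card < k} ∪ {Finset.univ}) := by
    rintro X ⟨hXH, hXk⟩
    have hXtr : X ∈ Tr {F | IsFlat H F} := by rw [← hBR]; exact hXH
    obtain ⟨m, x, C, hinj, hX, hCF, hchain, hxC⟩ := hXtr
    have hcard : X.card = m := by
      rw [hX, Finset.card_image_of_injective _ hinj, Finset.card_univ, Fintype.card_fin]
    have hmk : m ≤ k := by omega
    have hpfxH : ∀ j, pfx x j ∈ H :=
      fun j => hS.2 X hXH _ (by rw [hX]; exact pfx_subset_total x j)
    have key : ∀ i : Fin m, x i ∉ cl H (pfx x (i : ℕ)) := by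
      intro i
      have hsub : cl H (pfx x (i : ℕ)) ⊆ C i.castSucc :=
        cl_subset (hCF i.castSucc) (pfx_subset_chain hchain hxC i.castSucc)
      exact fun h => (hxC i).2 (hsub h)
    refine ⟨m, x, fun i => if (i : ℕ) = m then Finset.univ else cl H (pfx x (i : ℕ)),
      hinj, hX, ?_, ?_, ?_⟩
    · intro i
      dsimp only
      by_cases h : (i : ℕ) = m
      · rw [if_pos h]
        exact Or.inr rfl
      · rw [if_neg h]
        have him : (i : ℕ) < m := by have := i.isLt; omega
        refine Or.inl ⟨isFlat_cl _, ?_, pfx x (i : ℕ), hpfxH _, rfl, ?_⟩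
        · intro hu
          exact key ⟨(i : ℕ), him⟩ (hu ▸ Finset.mem_univ _)
        · rw [pfx_card hinj _ (by omega)]; omega
    · intro i
      dsimp only
      have hcs : ((i.castSucc : Fin (m + 1)) : ℕ) = (i : ℕ) := rfl
      have hne : ((i.castSucc : Fin (m + 1)) : ℕ) ≠ m := by rw [hcs]; have := i.isLt; omega
      rw [if_neg hne]
      by_cases h : ((i.succ : Fin (m + 1)) : ℕ) = m
      · rw [if_pos h]
        exact Finset.subset_univ _
      · rw [if_neg h]
        exact cl_mono (pfx_mono x (by rw [hcs, Fin.val_succ]; omega))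
    · intro i
      dsimp only
      have hcs : ((i.castSucc : Fin (m + 1)) : ℕ) = (i : ℕ) := rfl
      have hne : ((i.castSucc : Fin (m + 1)) : ℕ) ≠ m := by rw [hcs]; have := i.isLt; omega
      constructor
      · by_cases h : ((i.succ : Fin (m + 1)) : ℕ) = m
        · rw [if_pos h]
          exact Finset.mem_univ _
        · rw [if_neg h]
          exact subset_cl _ (mem_pfx x (by rw [Fin.val_succ]; omega))
      · rw [if_neg hne]
        exact key i
  have dir2 : Tr ({F : Finset V | IsFlat H F ∧ F ≠ Finset.univ ∧
      ∃ X ∈ H, cl H X = F ∧ X.card < k} ∪ {Finset.univ}) ⊆ trunc H k := by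
    intro X hXtr
    have hXH : X ∈ H := tr_subset_of_flats hempty hFkflats hXtr
    obtain ⟨m, x, C, hinj, hX, hCF, hchain, hxC⟩ := hXtr
    have hcard : X.card = m := by
      rw [hX, Finset.card_image_of_injective _ hinj, Finset.card_univ, Fintype.card_fin]
    refine ⟨hXH, ?_⟩
    rw [hcard]
    rcases Nat.eq_zero_or_pos m with hm | hm
    · omega
    · have hlt : m - 1 < m := by omega
      set i0 : Fin m := ⟨m - 1, hlt⟩ with hi0
      have hnu : C i0.castSucc ≠ Finset.univ := by
        intro hu
        exact (hxC i0).2 (hu ▸ Finset.mem_univ _)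
      rcases hCF i0.castSucc with ⟨hflat, hne, Y, hYH, hclY, hYk⟩ | hC
      · have hpfx_sub : pfx x (m - 1) ⊆ C i0.castSucc :=
          pfx_subset_chain hchain hxC i0.castSucc
        have hpfxH : pfx x (m - 1) ∈ H :=
          hS.2 X hXH _ (by rw [hX]; exact pfx_subset_total x _)
        obtain ⟨Z, hZsub, hZH, hZF, hZcl⟩ :=
          exists_extend hflat (C i0.castSucc).card _ (by omega) hpfxH hpfx_sub
        have hZY : Z.card = Y.card :=
          hNM Z hZH Y hYH (by rw [hZcl, hclY]) (by rw [hZcl]; exact hne)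
        have h1 : (pfx x (m - 1)).card ≤ Z.card := Finset.card_le_card hZsub
        rw [pfx_card hinj _ (by omega)] at h1
        omega
      · exact absurd hC hnu
  have claimA : trunc H k = Tr ({F : Finset V | IsFlat H F ∧ F ≠ Finset.univ ∧
      ∃ X ∈ H, cl H X = F ∧ X.card < k} ∪ {Finset.univ}) :=
    Set.Subset.antisymm dir1 dir2
  refine ⟨?_, claimA⟩
  have hFk_flats_trunc : ∀ A ∈ ({F : Finset V | IsFlat H F ∧ F ≠ Finset.univ ∧
      ∃ X ∈ H, cl H X = F ∧ X.card < k} ∪ {Finset.univ}), IsFlat (trunc H k) A := by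
    rintro A (⟨hflat, hne, Y, hYH, hclY, hYk⟩ | rfl)
    · rintro I ⟨hIH, hIk⟩ hIA p hp
      obtain ⟨Z, hZsub, hZH, hZA, hZcl⟩ :=
        exists_extend hflat A.card _ (by omega) hIH hIA
      have hZY : Z.card = Y.card :=
        hNM Z hZH Y hYH (by rw [hZcl, hclY]) (by rw [hZcl]; exact hne)
      have hIk' : I.card < k := by
        have := Finset.card_le_card hZsub
        omega
      refine ⟨hflat I hIH hIA p hp, ?_⟩
      calc (insert p I).card ≤ I.card + 1 := Finset.card_insert_le _ _
        _ ≤ k := by omega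
    · exact isFlat_univ
  have hemptyt : (∅ : Finset V) ∈ trunc H k := ⟨hempty, by simp⟩
  apply Set.Subset.antisymm
  · exact claimA ▸ (Tr_mono hFk_flats_trunc : _)
  · exact tr_subset_of_flats hemptyt (fun A hA => hA)
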